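/- If a finite loopless directed graph D=(V,A) with n vertices is a central interval catch digraph (CICD), then there is an enumeration v_1,…,v_n of V such that: (a) for all indices i<j<k, if (v_i,v_k)∈A then (v_i,v_j)∈A, and if (v_k,v_i)∈A then (v_k,v_j)∈A; and (b) for all i<j, either i_1≤j_1 or i_2≤j_2, where for each index m, m_1 denotes the least index such that m_1=m or (v_m,v_{m_1})∈A, and m_2 denotes the greatest index such that m_2=m or (v_m,v_{m_2})∈A. -/

import Mathlib

/-!
Enumerate the vertices by increasing centre `p u = (a u + b u) / 2`. The vertices caught by
`v m` are then those whose centre lies in `[a (v m), b (v m)]`, an interval of indices containing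
`m`, which gives (a). For (b), if `j₁ < i₁` and `j₂ < i₂` with `i < j`, then `v j₁` lies left of
`a (v i)` and `v i₂` right of `b (v j)`, so both endpoints of the interval of `v j` are smaller
than those of `v i`; its centre is then smaller too, contradicting the order of the centres.
-/

variable {V : Type*}

/-- An interval catch digraph representation: each vertex `u` gets an interval
`[a u, b u]` and a point `p u` inside it, and for distinct `u, v` there is an arc from
`u` to `v` iff `p v ∈ [a u, b u]`. -/
def IsICDRep (D : V → V → Prop) (a b p : V → ℝ) : Prop :=
  (∀ u, a u ≤ b u) ∧ (∀ u, p u ∈ Set.Icc (a u) (b u)) ∧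
    ∀ u v : V, u ≠ v → (D u v ↔ p v ∈ Set.Icc (a u) (b u))

/-- An interval catch digraph. -/
def IsICD (D : V → V → Prop) : Prop := ∃ a b p : V → ℝ, IsICDRep D a b p

/-- A central interval catch digraph: an ICD representation where every point is the
center of its interval. -/
def IsCICD (D : V → V → Prop) : Prop :=
  ∃ a b : V → ℝ, IsICDRep D a b (fun u => (a u + b u) / 2)

open Function Set

theorem Fintype.exists_bijective_monotone_comp {α : Type*} [LinearOrder α] [Fintype V]
    (f : V → α) {n : ℕ} (hn : Fintype.card V = n) :
    ∃ v : Fin n → V, Bijective v ∧ Monotone (f ∘ v) := by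
  let e : V ≃ Fin n := Fintype.equivFinOfCardEq hn
  exact ⟨e.symm ∘ Tuple.sort (f ∘ e.symm), e.symm.bijective.comp (Tuple.sort _).bijective,
    Tuple.monotone_sort (f ∘ e.symm)⟩

def catchSet {ι : Type*} (D : V → V → Prop) (v : ι → V) (m : ι) : Set ι :=
  {k | k = m ∨ D (v m) (v k)}

theorem self_mem_catchSet {ι : Type*} (D : V → V → Prop) (v : ι → V) (m : ι) :
    m ∈ catchSet D v m :=
  Or.inl rfl

namespace IsICDRep

variable {D : V → V → Prop} {a b p : V → ℝ}

theorem eq_or_adj_iff_mem_Icc (h : IsICDRep D a b p) (u w : V) :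
    (w = u ∨ D u w) ↔ p w ∈ Icc (a u) (b u) := by
  by_cases hwu : w = u
  · subst hwu
    simpa using h.2.1 w
  · simpa [hwu] using h.2.2 u w (Ne.symm hwu)

variable {ι : Type*} {v : ι → V}

theorem mem_catchSet_iff (h : IsICDRep D a b p) (hv : Injective v) (m k : ι) :
    k ∈ catchSet D v m ↔ p (v k) ∈ Icc (a (v m)) (b (v m)) := by
  rw [← h.eq_or_adj_iff_mem_Icc]
  exact or_congr_left hv.eq_iff.symm

variable [LinearOrder ι]

theorem ordConnected_catchSet (h : IsICDRep D a b p) (hv : Injective v)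
    (hmono : Monotone (p ∘ v)) (m : ι) : (catchSet D v m).OrdConnected := by
  have hset : catchSet D v m = p ∘ v ⁻¹' Icc (a (v m)) (b (v m)) :=
    Set.ext (h.mem_catchSet_iff hv m)
  rw [hset]
  exact ordConnected_Icc.preimage_mono hmono

theorem adj_of_lt_of_lt (h : IsICDRep D a b p) (hv : Injective v) (hmono : Monotone (p ∘ v))
    {i j k : ι} (hij : i < j) (hjk : j < k) :
    (D (v i) (v k) → D (v i) (v j)) ∧ (D (v k) (v i) → D (v k) (v j)) := by
  have hconn := h.ordConnected_catchSet hv hmono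
  constructor
  · intro hik
    have hj : j ∈ catchSet D v i :=
      (hconn i).out (self_mem_catchSet D v i) (Or.inr hik) ⟨hij.le, hjk.le⟩
    exact hj.resolve_left hij.ne'
  · intro hki
    have hj : j ∈ catchSet D v k :=
      (hconn k).out (Or.inr hki) (self_mem_catchSet D v k) ⟨hij.le, hjk.le⟩
    exact hj.resolve_left hjk.ne

theorem left_lt_of_lt_isLeast (h : IsICDRep D a b p) (hv : Injective v)
    (hmono : Monotone (p ∘ v)) {i j i₁ j₁ : ι} (hi₁ : IsLeast (catchSet D v i) i₁)
    (hj₁ : j₁ ∈ catchSet D v j) (hlt : j₁ < i₁) : a (v j) < a (v i) := by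
  have hj₁i : j₁ ≤ i := hlt.le.trans (hi₁.2 (self_mem_catchSet D v i))
  have hout : j₁ ∉ catchSet D v i := fun hmem => hlt.not_ge (hi₁.2 hmem)
  have hle : p (v j₁) ≤ b (v i) := (hmono hj₁i).trans (h.2.1 (v i)).2
  rw [h.mem_catchSet_iff hv, mem_Icc, not_and_or, not_le, not_le] at hout
  calc a (v j) ≤ p (v j₁) := ((h.mem_catchSet_iff hv j j₁).1 hj₁).1
    _ < a (v i) := hout.resolve_right hle.not_gt

theorem right_lt_of_lt_isGreatest (h : IsICDRep D a b p) (hv : Injective v)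
    (hmono : Monotone (p ∘ v)) {i j i₂ j₂ : ι} (hi₂ : i₂ ∈ catchSet D v i)
    (hj₂ : IsGreatest (catchSet D v j) j₂) (hlt : j₂ < i₂) : b (v j) < b (v i) := by
  have hji₂ : j ≤ i₂ := (hj₂.2 (self_mem_catchSet D v j)).trans hlt.le
  have hout : i₂ ∉ catchSet D v j := fun hmem => hlt.not_ge (hj₂.2 hmem)
  have hge : a (v j) ≤ p (v i₂) := (h.2.1 (v j)).1.trans (hmono hji₂)
  rw [h.mem_catchSet_iff hv, mem_Icc, not_and_or, not_le, not_le] at hout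
  calc b (v j) < p (v i₂) := hout.resolve_left hge.not_gt
    _ ≤ b (v i) := ((h.mem_catchSet_iff hv i i₂).1 hi₂).2

end IsICDRep

theorem cicd_enumeration_condition_general [Fintype V] (D : V → V → Prop)
    (n : ℕ) (hn : Fintype.card V = n) (hD : IsCICD D) :
    ∃ v : Fin n → V, Function.Bijective v ∧
      (∀ i j k : Fin n, i < j → j < k →
        (D (v i) (v k) → D (v i) (v j)) ∧ (D (v k) (v i) → D (v k) (v j))) ∧
      (∀ i j i₁ i₂ j₁ j₂ : Fin n, i < j →
        (i₁ = i ∨ D (v i) (v i₁)) → (∀ k : Fin n, (k = i ∨ D (v i) (v k)) → i₁ ≤ k) →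
        (i₂ = i ∨ D (v i) (v i₂)) → (∀ k : Fin n, (k = i ∨ D (v i) (v k)) → k ≤ i₂) →
        (j₁ = j ∨ D (v j) (v j₁)) → (∀ k : Fin n, (k = j ∨ D (v j) (v k)) → j₁ ≤ k) →
        (j₂ = j ∨ D (v j) (v j₂)) → (∀ k : Fin n, (k = j ∨ D (v j) (v k)) → k ≤ j₂) →
        (i₁ ≤ j₁ ∨ i₂ ≤ j₂)) := by
  obtain ⟨a, b, h⟩ := hD
  obtain ⟨v, hv, hmono⟩ := Fintype.exists_bijective_monotone_comp (fun u => (a u + b u) / 2) hn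
  refine ⟨v, hv, fun i j k hij hjk => h.adj_of_lt_of_lt hv.1 hmono hij hjk, ?_⟩
  intro i j i₁ i₂ j₁ j₂ hij hi₁ hi₁_le hi₂ _ hj₁ _ hj₂ hj₂_ge
  by_contra! hlt
  have ha := h.left_lt_of_lt_isLeast hv.1 hmono ⟨hi₁, fun k hk => hi₁_le k hk⟩ hj₁ hlt.1
  have hb := h.right_lt_of_lt_isGreatest hv.1 hmono hi₂ ⟨hj₂, fun k hk => hj₂_ge k hk⟩ hlt.2
  have hcentre : (a (v i) + b (v i)) / 2 ≤ (a (v j) + b (v j)) / 2 := hmono hij.le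
  linarith

/-- If a finite loopless digraph `D` with `n` vertices is a CICD, then its vertices can
be enumerated `v 0, …, v (n-1)` so that (a) for `i < j < k`, an arc `(v i, v k)` forces
the arc `(v i, v j)`, and an arc `(v k, v i)` forces the arc `(v k, v j)`; and (b) for
`i < j`, either `i₁ ≤ j₁` or `i₂ ≤ j₂`, where `m₁` (resp. `m₂`) is the least
(resp. greatest) index equal to `m` or joined from `v m` by an arc. -/
theorem cicd_enumeration_condition [Fintype V] (D : V → V → Prop)
    (hloop : ∀ u, ¬ D u u) (n : ℕ) (hn : Fintype.card V = n) (hD : IsCICD D) :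
    ∃ v : Fin n → V, Function.Bijective v ∧
      (∀ i j k : Fin n, i < j → j < k →
        (D (v i) (v k) → D (v i) (v j)) ∧ (D (v k) (v i) → D (v k) (v j))) ∧
      (∀ i j i₁ i₂ j₁ j₂ : Fin n, i < j →
        (i₁ = i ∨ D (v i) (v i₁)) → (∀ k : Fin n, (k = i ∨ D (v i) (v k)) → i₁ ≤ k) →
        (i₂ = i ∨ D (v i) (v i₂)) → (∀ k : Fin n, (k = i ∨ D (v i) (v k)) → k ≤ i₂) →
        (j₁ = j ∨ D (v j) (v j₁)) → (∀ k : Fin n, (k = j ∨ D (v j) (v k)) → j₁ ≤ k) →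
        (j₂ = j ∨ D (v j) (v j₂)) → (∀ k : Fin n, (k = j ∨ D (v j) (v k)) → k ≤ j₂) →
        (i₁ ≤ j₁ ∨ i₂ ≤ j₂)) :=
  cicd_enumeration_condition_general D n hn hD
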